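/- Let n ≥ 1 and let Θ ⊆ {1,…,n} be a subset containing an odd integer. Let Ω be the set of 2n×2n real matrices u such that uᵀJu = J, u is upper triangular with every diagonal entry equal to 1, and p_j(u) ≠ 0 for every j ∈ Θ, equipped with the subspace topology from the space of 2n×2n real matrices. Then for every u ∈ Ω, the inverse u⁻¹ belongs to Ω but u⁻¹ does not lie in the connected component of u in Ω. -/

import Mathlib

open Matrix

/-- The standard symplectic matrix: the (2n+1−i, i) entry (1-based) is (−1)^i,
all other entries are 0. -/
def Jmat (n : ℕ) : Matrix (Fin (2*n)) (Fin (2*n)) ℝ :=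
  Matrix.of fun i j => if (i:ℕ) + (j:ℕ) = 2*n - 1 then (-1 : ℝ)^((j:ℕ)+1) else 0

/-- The antiprincipal k×k minor `p_k(g)`. -/
def pMinor (n k : ℕ) (g : Matrix (Fin (2*n)) (Fin (2*n)) ℝ) : ℝ :=
  Matrix.det (Matrix.of fun i j : Fin k =>
    if h : (i:ℕ) < 2*n then
      g ⟨(i:ℕ), h⟩ ⟨2*n - 1 - (j:ℕ), by omega⟩
    else 0)

/-- sign powers depend only on parity -/
lemma neg_one_pow_congr_mod2 {a b : ℕ} (h : a % 2 = b % 2) : (-1:ℝ)^a = (-1:ℝ)^b := by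
  rcases Nat.even_or_odd a with ha | ha
  · have hb : Even b := by rw [Nat.even_iff] at *; omega
    rw [ha.neg_one_pow, hb.neg_one_pow]
  · have hb : Odd b := by rw [Nat.odd_iff] at *; omega
    rw [ha.neg_one_pow, hb.neg_one_pow]

/-- the reversal map on indices -/
def revF (n : ℕ) (i : Fin (2*n)) : Fin (2*n) := ⟨2*n - 1 - (i:ℕ), by omega⟩

lemma revF_revF (n : ℕ) (i : Fin (2*n)) : revF n (revF n i) = i := by
  have := i.isLt
  simp only [revF]
  exact Fin.ext (by simp; omega)

lemma J_mul_apply (n : ℕ) (A : Matrix (Fin (2*n)) (Fin (2*n)) ℝ) (i k : Fin (2*n)) :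
    (Jmat n * A) i k = (-1:ℝ)^((i:ℕ)) * A (revF n i) k := by
  have hi := i.isLt
  rw [Matrix.mul_apply]
  rw [Finset.sum_eq_single (revF n i)]
  · have hcond : (i:ℕ) + ((revF n i : Fin (2*n)):ℕ) = 2*n - 1 := by simp [revF]; omega
    simp only [Jmat, Matrix.of_apply, hcond, if_pos]
    congr 1
    exact neg_one_pow_congr_mod2 (by simp [revF]; omega)
  · intro b _ hb
    have : (i:ℕ) + (b:ℕ) ≠ 2*n - 1 := by
      intro hc
      apply hb
      exact Fin.ext (by simp [revF]; omega)
    simp [Jmat, this]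
  · intro h; exact absurd (Finset.mem_univ _) h

lemma mul_J_apply (n : ℕ) (A : Matrix (Fin (2*n)) (Fin (2*n)) ℝ) (i k : Fin (2*n)) :
    (A * Jmat n) i k = (-1:ℝ)^((k:ℕ)+1) * A i (revF n k) := by
  have hk := k.isLt
  rw [Matrix.mul_apply]
  rw [Finset.sum_eq_single (revF n k)]
  · have hcond : ((revF n k : Fin (2*n)):ℕ) + (k:ℕ) = 2*n - 1 := by simp [revF]; omega
    simp only [Jmat, Matrix.of_apply, hcond, if_pos]
    ring
  · intro b _ hb
    have : (b:ℕ) + (k:ℕ) ≠ 2*n - 1 := by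
      intro hc
      apply hb
      exact Fin.ext (by simp [revF]; omega)
    simp [Jmat, this]
  · intro h; exact absurd (Finset.mem_univ _) h

lemma J_sq (n : ℕ) : Jmat n * Jmat n = (-1 : Matrix (Fin (2*n)) (Fin (2*n)) ℝ) := by
  ext i k
  have hi := i.isLt
  have hk := k.isLt
  rw [J_mul_apply]
  simp only [Jmat, Matrix.of_apply, revF]
  by_cases h : k = i
  · subst h
    have hcond : (2*n - 1 - (k:ℕ)) + (k:ℕ) = 2*n - 1 := by omega
    simp only [hcond, if_pos]
    have : (-1:ℝ)^((k:ℕ)) * (-1:ℝ)^((k:ℕ)+1) = (-1:ℝ)^(2*(k:ℕ)+1) := by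
      rw [← pow_add]; congr 1; omega
    rw [this, neg_one_pow_congr_mod2 (a := 2*(k:ℕ)+1) (b := 1) (by omega)]
    simp
  · have hcond : (2*n - 1 - (i:ℕ)) + (k:ℕ) ≠ 2*n - 1 := by
      intro hc; exact h (Fin.ext (by omega))
    simp only [hcond, if_neg, mul_zero]
    simp [Matrix.neg_apply, Matrix.one_apply, Ne.symm h, h]

section Main


section Main

variable {n : ℕ}

/-- explicit inverse for symplectic matrices -/
lemma symp_inv_entries (u : Matrix (Fin (2*n)) (Fin (2*n)) ℝ)
    (hsymp : uᵀ * Jmat n * u = Jmat n) :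
    (u⁻¹ = Matrix.of fun (i m : Fin (2*n)) => (-1:ℝ)^((i:ℕ)+(m:ℕ)) * u (revF n m) (revF n i)) := by
  set V : Matrix (Fin (2*n)) (Fin (2*n)) ℝ :=
    Matrix.of fun i m => (-1:ℝ)^((i:ℕ)+(m:ℕ)) * u (revF n m) (revF n i) with hV
  have hVJ : V = -(Jmat n * uᵀ * Jmat n) := by
    ext i m
    have hi := i.isLt
    rw [Matrix.neg_apply, mul_J_apply, J_mul_apply]
    simp only [hV, Matrix.of_apply, Matrix.transpose_apply]
    have : -((-1:ℝ)^((m:ℕ)+1) * ((-1:ℝ)^((i:ℕ)) * u (revF n m) (revF n i)))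
        = ((-1:ℝ)^((m:ℕ)+1) * (-1:ℝ)^((i:ℕ)) * (-1:ℝ)) * u (revF n m) (revF n i) := by ring
    rw [this]
    congr 1
    rw [← pow_add, ← pow_succ]
    exact (neg_one_pow_congr_mod2 (by omega)).symm
  have hVu : V * u = 1 := by
    rw [hVJ]
    have : Jmat n * uᵀ * Jmat n * u = Jmat n * (uᵀ * Jmat n * u) := by
      simp only [Matrix.mul_assoc]
    rw [neg_mul, this, hsymp, J_sq]
    simp
  exact Matrix.inv_eq_left_inv hVu

lemma pMinor_inv (u : Matrix (Fin (2*n)) (Fin (2*n)) ℝ)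
    (hsymp : uᵀ * Jmat n * u = Jmat n) (j : ℕ) (hj : j ≤ 2*n) :
    pMinor n j u⁻¹ = (-1:ℝ)^j * pMinor n j u := by
  have hinv := symp_inv_entries u hsymp
  set N : Matrix (Fin j) (Fin j) ℝ := Matrix.of fun i l : Fin j =>
    if h : (i:ℕ) < 2*n then u ⟨(i:ℕ), h⟩ ⟨2*n - 1 - (l:ℕ), by omega⟩ else 0 with hN
  set M2 : Matrix (Fin j) (Fin j) ℝ :=
    Matrix.of fun i l : Fin j => (-1:ℝ)^((l:ℕ)+1) * Nᵀ i l with hM2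
  have key : (Matrix.of fun i l : Fin j =>
      if h : (i:ℕ) < 2*n then u⁻¹ ⟨(i:ℕ), h⟩ ⟨2*n - 1 - (l:ℕ), by omega⟩ else 0)
      = Matrix.of fun i l : Fin j => (-1:ℝ)^((i:ℕ)) * M2 i l := by
    ext i l
    have hij : (i:ℕ) < 2*n := lt_of_lt_of_le i.isLt hj
    have hlj : (l:ℕ) < 2*n := lt_of_lt_of_le l.isLt hj
    simp only [Matrix.of_apply, hij, dif_pos, hinv, Matrix.transpose_apply, hM2, hN]
    have h1 : revF n (⟨2*n - 1 - (l:ℕ), by omega⟩ : Fin (2*n)) = ⟨(l:ℕ), hlj⟩ :=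
      Fin.ext (by simp [revF]; omega)
    have h2 : revF n (⟨(i:ℕ), hij⟩ : Fin (2*n)) = ⟨2*n - 1 - (i:ℕ), by omega⟩ :=
      Fin.ext (by simp [revF])
    rw [h1, h2]
    simp only [hlj, dif_pos]
    rw [neg_one_pow_congr_mod2 (a := (i:ℕ) + (2*n-1-(l:ℕ))) (b := (i:ℕ) + ((l:ℕ)+1)) (by omega),
      pow_add]
    ring
  have d1 : Matrix.det (Matrix.of fun i l : Fin j => (-1:ℝ)^((i:ℕ)) * M2 i l)
      = (∏ i : Fin j, (-1:ℝ)^((i:ℕ))) * Matrix.det M2 :=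
    Matrix.det_mul_column (fun i : Fin j => (-1:ℝ)^((i:ℕ))) M2
  have d2 : Matrix.det M2 = (∏ l : Fin j, (-1:ℝ)^((l:ℕ)+1)) * Matrix.det Nᵀ := by
    rw [hM2]
    exact Matrix.det_mul_row (fun l : Fin j => (-1:ℝ)^((l:ℕ)+1)) Nᵀ
  have hsign : (∏ i : Fin j, (-1:ℝ)^((i:ℕ))) * (∏ l : Fin j, (-1:ℝ)^((l:ℕ)+1)) = (-1:ℝ)^j := by
    rw [← Finset.prod_mul_distrib]
    have heach : ∀ i : Fin j, (-1:ℝ)^((i:ℕ)) * (-1:ℝ)^((i:ℕ)+1) = -1 := by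
      intro i
      rw [← pow_add]
      exact neg_one_pow_congr_mod2 (a := (i:ℕ)+((i:ℕ)+1)) (b := 1) (by omega) |>.trans (pow_one _)
    rw [Finset.prod_congr rfl (fun i _ => heach i)]
    simp
  show Matrix.det _ = _
  rw [key, d1, d2, Matrix.det_transpose, hN]
  show _ = (-1:ℝ)^j * pMinor n j u
  unfold pMinor
  rw [← hsign]
  ring

lemma pMinor_continuous (j : ℕ) :
    Continuous (fun g : Matrix (Fin (2*n)) (Fin (2*n)) ℝ => pMinor n j g) := by
  unfold pMinor
  apply Continuous.matrix_det
  apply continuous_matrix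
  intro i l
  by_cases h : (i:ℕ) < 2*n
  · simp only [Matrix.of_apply, h, dif_pos]
    exact (continuous_apply _).comp (continuous_apply _)
  · simp only [Matrix.of_apply, h, dif_neg, not_false_iff]
    exact continuous_const

/-- If `Θ ⊆ {1,…,n}` contains an odd integer, then for any symplectic, unipotent upper
triangular `u` with `p_j(u) ≠ 0` for all `j ∈ Θ`, the inverse `u⁻¹` satisfies the same
conditions but lies in a different connected component of the set `Ω` of all such matrices. -/
theorem inverse_in_other_component (n : ℕ) (hn : 1 ≤ n)
    (Θ : Set ℕ) (hΘ : Θ ⊆ Set.Icc 1 n) (hodd : ∃ j ∈ Θ, Odd j)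
    (Ω : Set (Matrix (Fin (2*n)) (Fin (2*n)) ℝ))
    (hΩ : Ω = { u | uᵀ * Jmat n * u = Jmat n ∧
      (∀ i j : Fin (2*n), (j:ℕ) < (i:ℕ) → u i j = 0) ∧
      (∀ i : Fin (2*n), u i i = 1) ∧
      (∀ j ∈ Θ, pMinor n j u ≠ 0) }) :
    ∀ u ∈ Ω, u⁻¹ ∈ Ω ∧ u⁻¹ ∉ connectedComponentIn Ω u := by
  subst hΩ
  intro u hu
  have hu' := hu
  obtain ⟨hsymp, htri, hdiag, hmin⟩ := hu'
  have hinv := symp_inv_entries u hsymp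
  -- u is invertible
  have hbt : u.BlockTriangular id := fun i j hij => htri i j hij
  have hdet : u.det = 1 := by
    rw [Matrix.det_of_upperTriangular hbt]
    simp [hdiag]
  have huu : u * u⁻¹ = 1 := Matrix.mul_nonsing_inv u (by rw [hdet]; exact isUnit_one)
  -- u⁻¹ is symplectic
  have hsymp' : (u⁻¹)ᵀ * Jmat n * u⁻¹ = Jmat n := by
    calc (u⁻¹)ᵀ * Jmat n * u⁻¹
        = (u⁻¹)ᵀ * (uᵀ * Jmat n * u) * u⁻¹ := by rw [hsymp]
      _ = (u * u⁻¹)ᵀ * Jmat n * (u * u⁻¹) := by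
          simp only [Matrix.transpose_mul, Matrix.mul_assoc]
      _ = Jmat n := by rw [huu]; simp
  -- u⁻¹ is upper triangular
  have htri' : ∀ i j : Fin (2*n), (j:ℕ) < (i:ℕ) → u⁻¹ i j = 0 := by
    intro i j hij
    rw [hinv]
    simp only [Matrix.of_apply]
    have hz : u (revF n j) (revF n i) = 0 := by
      apply htri
      have hi := i.isLt
      simp only [revF]
      omega
    rw [hz, mul_zero]
  -- u⁻¹ has unit diagonal
  have hdiag' : ∀ i : Fin (2*n), u⁻¹ i i = 1 := by
    intro i
    rw [hinv]
    simp only [Matrix.of_apply]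
    rw [hdiag, (Even.neg_one_pow ⟨(i:ℕ), rfl⟩ : (-1:ℝ)^((i:ℕ)+(i:ℕ)) = 1), mul_one]
  -- minors of u⁻¹
  have hminval : ∀ j ∈ Θ, pMinor n j u⁻¹ = (-1:ℝ)^j * pMinor n j u := by
    intro j hjΘ
    have hj := hΘ hjΘ
    exact pMinor_inv u hsymp j (by simp only [Set.mem_Icc] at hj; omega)
  have hmin' : ∀ j ∈ Θ, pMinor n j u⁻¹ ≠ 0 := by
    intro j hjΘ
    rw [hminval j hjΘ]
    exact mul_ne_zero (pow_ne_zero _ (by norm_num)) (hmin j hjΘ)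
  refine ⟨⟨hsymp', htri', hdiag', hmin'⟩, ?_⟩
  -- the connectivity argument
  intro hmem
  obtain ⟨j, hjΘ, hjodd⟩ := hodd
  set f := fun g : Matrix (Fin (2*n)) (Fin (2*n)) ℝ => pMinor n j g with hf
  set C := connectedComponentIn
    { u : Matrix (Fin (2*n)) (Fin (2*n)) ℝ | uᵀ * Jmat n * u = Jmat n ∧
      (∀ i j : Fin (2*n), (j:ℕ) < (i:ℕ) → u i j = 0) ∧
      (∀ i : Fin (2*n), u i i = 1) ∧
      (∀ j ∈ Θ, pMinor n j u ≠ 0) } u with hC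
  have hCpre : IsPreconnected C := isPreconnected_connectedComponentIn
  have hCsub := connectedComponentIn_subset
    { u : Matrix (Fin (2*n)) (Fin (2*n)) ℝ | uᵀ * Jmat n * u = Jmat n ∧
      (∀ i j : Fin (2*n), (j:ℕ) < (i:ℕ) → u i j = 0) ∧
      (∀ i : Fin (2*n), u i i = 1) ∧
      (∀ j ∈ Θ, pMinor n j u ≠ 0) } u
  have huC : u ∈ C := mem_connectedComponentIn hu
  have himg : IsPreconnected (f '' C) :=
    hCpre.image f (pMinor_continuous j).continuousOn
  have ha : f u ∈ f '' C := Set.mem_image_of_mem f huC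
  have hb : f u⁻¹ ∈ f '' C := Set.mem_image_of_mem f hmem
  have hneg : f u⁻¹ = -(f u) := by
    simp only [hf]
    rw [hminval j hjΘ, hjodd.neg_one_pow]
    ring
  have hane : f u ≠ 0 := hmin j hjΘ
  rw [hneg] at hb
  have h0 : (0:ℝ) ∈ f '' C := by
    rcases lt_or_gt_of_ne hane with hlt | hgt
    · exact himg.Icc_subset ha hb ⟨le_of_lt hlt, by linarith⟩
    · exact himg.Icc_subset hb ha ⟨by linarith, le_of_lt hgt⟩
  obtain ⟨w, hwC, hw0⟩ := h0
  exact (hCsub hwC).2.2.2 j hjΘ hw0
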